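/- arXiv:1405.5783 — 3 statements merged into one kernel-verified Lean document; each statement's English description precedes it below -/
import Mathlib

section
/- There exists a constant c > 0 such that for all x > 0 and all v ∈ [a,b] ⊂ (1/α,1), one has |θ(x,v)| ≤ c (1+x)^{v - 1/α - 1}, where θ(x,v) = (1+v-1/α)^{-1}[(x-1)_+^{1+v-1/α} - 2(x-1/2)_+^{1+v-1/α} + x_+^{1+v-1/α}]. -/
open Real

/-- `(s)_+^κ`: equals `s^κ` if `s > 0`, and `0` otherwise. -/
noncomputable def posPow (s κ : ℝ) : ℝ := if 0 < s then s ^ κ else 0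

noncomputable def theta (α x v : ℝ) : ℝ :=
  (1 + v - 1/α)⁻¹ *
    (posPow (x - 1) (1 + v - 1/α) - 2 * posPow (x - 1/2) (1 + v - 1/α)
      + posPow x (1 + v - 1/α))

/-- Tangent-line upper bound for convex rpow: `t^p - s^p ≤ p t^{p-1} (t-s)`. -/
lemma tangent_upper {p s t : ℝ} (hs : 0 ≤ s) (hst : s ≤ t) (hp : 1 ≤ p) :
    t ^ p - s ^ p ≤ p * t ^ (p - 1) * (t - s) := by
  rcases eq_or_lt_of_le (hs.trans hst) with ht | ht
  · have hs0 : s = 0 := le_antisymm (hst.trans ht.symm.le) hs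
    have hp0 : p ≠ 0 := by positivity
    simp [← ht, hs0, Real.zero_rpow hp0]
  · have hz : -1 ≤ s / t - 1 := by
      have : 0 ≤ s / t := div_nonneg hs ht.le
      linarith
    have hb := one_add_mul_self_le_rpow_one_add hz hp
    rw [show (1 + (s / t - 1)) = s / t by ring, Real.div_rpow hs ht.le] at hb
    have htp : 0 < t ^ p := Real.rpow_pos_of_pos ht p
    have h2 : (1 + p * (s / t - 1)) * t ^ p ≤ s ^ p := (le_div_iff₀ htp).mp hb
    have h3 : p * t ^ (p - 1) * (t - s) = p * (1 - s / t) * t ^ p := by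
      rw [Real.rpow_sub_one ht.ne' p]
      field_simp
    nlinarith [h2]

/-- Tangent-line lower bound for convex rpow: `p s^{p-1} (t-s) ≤ t^p - s^p`. -/
lemma tangent_lower {p s t : ℝ} (hs : 0 < s) (hst : s ≤ t) (hp : 1 ≤ p) :
    p * s ^ (p - 1) * (t - s) ≤ t ^ p - s ^ p := by
  have hz : -1 ≤ t / s - 1 := by
    have : 0 ≤ t / s := div_nonneg (hs.le.trans hst) hs.le
    linarith
  have hb := one_add_mul_self_le_rpow_one_add hz hp
  rw [show (1 + (t / s - 1)) = t / s by ring,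
    Real.div_rpow (hs.le.trans hst) hs.le] at hb
  have hsp : 0 < s ^ p := Real.rpow_pos_of_pos hs p
  have h2 : (1 + p * (t / s - 1)) * s ^ p ≤ t ^ p := (le_div_iff₀ hsp).mp hb
  have h3 : p * s ^ (p - 1) * (t - s) = p * (t / s - 1) * s ^ p := by
    rw [Real.rpow_sub_one hs.ne' p]
    field_simp
  nlinarith [h2]

/-- Tangent-line upper bound for concave rpow: `t^q - s^q ≤ q s^{q-1} (t-s)`. -/
lemma concave_upper {q s t : ℝ} (hs : 0 < s) (hst : s ≤ t) (hq0 : 0 ≤ q) (hq1 : q ≤ 1) :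
    t ^ q - s ^ q ≤ q * s ^ (q - 1) * (t - s) := by
  have hz : -1 ≤ t / s - 1 := by
    have : 0 ≤ t / s := div_nonneg (hs.le.trans hst) hs.le
    linarith
  have hb := rpow_one_add_le_one_add_mul_self hz hq0 hq1
  rw [show (1 + (t / s - 1)) = t / s by ring,
    Real.div_rpow (hs.le.trans hst) hs.le] at hb
  have hsp : 0 < s ^ q := Real.rpow_pos_of_pos hs q
  have h2 : t ^ q ≤ (1 + q * (t / s - 1)) * s ^ q := (div_le_iff₀ hsp).mp hb
  have h3 : q * s ^ (q - 1) * (t - s) = q * (t / s - 1) * s ^ q := by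
    rw [Real.rpow_sub_one hs.ne' q]
    field_simp
  nlinarith [h2]

set_option maxHeartbeats 1000000 in
theorem stmt3 (α a b : ℝ) (hα : 1 < α ∧ α < 2) (hab : 1/α < a ∧ a < b ∧ b < 1) :
    ∃ c : ℝ, 0 < c ∧ ∀ x v : ℝ, 0 < x → v ∈ Set.Icc a b →
      |theta α x v| ≤ c * (1 + x) ^ (v - 1/α - 1) := by
  obtain ⟨hα1, hα2⟩ := hα
  obtain ⟨ha, hab', hb1⟩ := hab
  refine ⟨48, by norm_num, ?_⟩
  intro x v hx hv
  obtain ⟨hva, hvb⟩ := hv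
  have hαpos : 0 < α := by linarith
  have hi1 : 1/α < 1 := by rw [div_lt_one hαpos]; linarith
  have hi2 : 1/2 < 1/α := by
    rw [div_lt_div_iff₀ (by norm_num) hαpos]; linarith
  set κ := 1 + v - 1/α with hκdef
  have hκ1 : 1 < κ := by rw [hκdef]; linarith
  have hκ2 : κ < 3/2 := by rw [hκdef]; linarith
  have hexp : v - 1/α - 1 = κ - 2 := by rw [hκdef]; ring
  have hθ : theta α x v
      = κ⁻¹ * (posPow (x - 1) κ - 2 * posPow (x - 1/2) κ + posPow x κ) := rfl
  clear_value κ
  rw [hexp, hθ]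
  have h1x : (0:ℝ) < 1 + x := by linarith
  have hκpos : (0:ℝ) < κ := by linarith
  by_cases hx2 : x ≤ 2
  · -- small x
    have hbd : ∀ s : ℝ, s ≤ 2 → 0 ≤ posPow s κ ∧ posPow s κ ≤ 4 := by
      intro s hs
      unfold posPow
      split_ifs with h
      · constructor
        · positivity
        · have h1 : s ^ κ ≤ (2:ℝ) ^ κ := Real.rpow_le_rpow h.le hs hκpos.le
          have h2 : (2:ℝ) ^ κ ≤ (2:ℝ) ^ (2:ℝ) :=
            Real.rpow_le_rpow_of_exponent_le one_le_two (by linarith)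
          have h3 : (2:ℝ) ^ (2:ℝ) = 4 := by
            rw [show (2:ℝ) = ((2:ℕ):ℝ) from by norm_num, Real.rpow_natCast]
            norm_num
          linarith
      · norm_num
    obtain ⟨hA0, hA4⟩ := hbd (x - 1) (by linarith)
    obtain ⟨hB0, hB4⟩ := hbd (x - 1/2) (by linarith)
    obtain ⟨hC0, hC4⟩ := hbd x (by linarith)
    have habs : |posPow (x - 1) κ - 2 * posPow (x - 1/2) κ + posPow x κ| ≤ 16 := by
      rw [abs_le]; constructor <;> linarith
    have hκinv : κ⁻¹ ≤ 1 := by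
      rw [inv_le_one_iff₀]; right; linarith
    have hκinvpos : 0 < κ⁻¹ := by positivity
    have hL : |κ⁻¹ * (posPow (x - 1) κ - 2 * posPow (x - 1/2) κ + posPow x κ)| ≤ 16 := by
      rw [abs_mul, abs_of_pos hκinvpos]
      calc κ⁻¹ * |posPow (x - 1) κ - 2 * posPow (x - 1/2) κ + posPow x κ|
          ≤ 1 * 16 := mul_le_mul hκinv habs (abs_nonneg _) zero_le_one
        _ = 16 := by norm_num
    have h31 : (3:ℝ) ^ (-1:ℝ) ≤ (3:ℝ) ^ (κ - 2) :=
      Real.rpow_le_rpow_of_exponent_le (by norm_num) (by linarith)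
    have h3inv : (3:ℝ) ^ (-1:ℝ) = 1/3 := by
      rw [Real.rpow_neg_one]; norm_num
    have h3x : (3:ℝ) ^ (κ - 2) ≤ (1 + x) ^ (κ - 2) :=
      Real.rpow_le_rpow_of_nonpos h1x (by linarith) (by linarith)
    have hfin : (16:ℝ) ≤ 48 * (1 + x) ^ (κ - 2) := by
      have h := h31.trans h3x
      rw [h3inv] at h
      linarith
    linarith
  · -- large x
    push_neg at hx2
    have hx1 : (0:ℝ) < x - 1 := by linarith
    have hxh : (0:ℝ) < x - 1/2 := by linarith
    have hP1 : posPow (x - 1) κ = (x - 1) ^ κ := if_pos hx1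
    have hP2 : posPow (x - 1/2) κ = (x - 1/2) ^ κ := if_pos hxh
    have hP3 : posPow x κ = x ^ κ := if_pos hx
    rw [hP1, hP2, hP3]
    have hconv := (convexOn_rpow hκ1.le).2 (Set.mem_Ici.mpr (by linarith : (0:ℝ) ≤ x))
      (Set.mem_Ici.mpr hx1.le) (by norm_num : (0:ℝ) ≤ 1/2) (by norm_num : (0:ℝ) ≤ 1/2)
      (by norm_num)
    simp only [smul_eq_mul] at hconv
    rw [show (1/2:ℝ) * x + 1/2 * (x - 1) = x - 1/2 from by ring] at hconv
    have hD0 : 0 ≤ (x - 1) ^ κ - 2 * (x - 1/2) ^ κ + x ^ κ := by linarith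
    have hup := tangent_upper (p := κ) (s := x - 1/2) (t := x) hxh.le (by linarith) hκ1.le
    rw [show x - (x - 1/2) = 1/2 from by ring] at hup
    have hlo := tangent_lower (p := κ) (s := x - 1) (t := x - 1/2) hx1 (by linarith) hκ1.le
    rw [show x - 1/2 - (x - 1) = 1/2 from by ring] at hlo
    have hcon := concave_upper (q := κ - 1) (s := x - 1) (t := x) hx1 (by linarith)
      (by linarith) (by linarith)
    rw [show x - (x - 1) = 1 from by ring, show κ - 1 - 1 = κ - 2 from by ring] at hcon
    have h4 : κ * (x ^ (κ - 1) - (x - 1) ^ (κ - 1))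
        ≤ κ * ((κ - 1) * (x - 1) ^ (κ - 2) * 1) :=
      mul_le_mul_of_nonneg_left hcon hκpos.le
    have hD : (x - 1) ^ κ - 2 * (x - 1/2) ^ κ + x ^ κ
        ≤ κ / 2 * ((κ - 1) * (x - 1) ^ (κ - 2)) := by nlinarith [hup, hlo, h4]
    have hxk2 : 0 < (x - 1) ^ (κ - 2) := Real.rpow_pos_of_pos hx1 _
    have hκinvpos : 0 < κ⁻¹ := by positivity
    have habs : |κ⁻¹ * ((x - 1) ^ κ - 2 * (x - 1/2) ^ κ + x ^ κ)|
        = κ⁻¹ * ((x - 1) ^ κ - 2 * (x - 1/2) ^ κ + x ^ κ) := by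
      apply abs_of_nonneg
      positivity
    rw [habs]
    have hstep : κ⁻¹ * ((x - 1) ^ κ - 2 * (x - 1/2) ^ κ + x ^ κ)
        ≤ (x - 1) ^ (κ - 2) := by
      have h1 : κ⁻¹ * ((x - 1) ^ κ - 2 * (x - 1/2) ^ κ + x ^ κ)
          ≤ κ⁻¹ * (κ / 2 * ((κ - 1) * (x - 1) ^ (κ - 2))) :=
        mul_le_mul_of_nonneg_left hD hκinvpos.le
      have h2 : κ⁻¹ * (κ / 2 * ((κ - 1) * (x - 1) ^ (κ - 2)))
          = (κ⁻¹ * κ) * ((κ - 1) / 2 * (x - 1) ^ (κ - 2)) := by ring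
      rw [h2, inv_mul_cancel₀ hκpos.ne', one_mul] at h1
      have h5 : (κ - 1) / 2 * (x - 1) ^ (κ - 2) ≤ 1 * (x - 1) ^ (κ - 2) :=
        mul_le_mul_of_nonneg_right (by linarith) hxk2.le
      rw [one_mul] at h5
      linarith
    have hmono : (3 * (x - 1)) ^ (κ - 2) ≤ (1 + x) ^ (κ - 2) :=
      Real.rpow_le_rpow_of_nonpos h1x (by linarith) (by linarith)
    rw [Real.mul_rpow (by norm_num) hx1.le] at hmono
    have h3le : (3:ℝ) ^ (-1:ℝ) ≤ (3:ℝ) ^ (κ - 2) :=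
      Real.rpow_le_rpow_of_exponent_le (by norm_num) (by linarith)
    have h3inv : (3:ℝ) ^ (-1:ℝ) = 1/3 := by
      rw [Real.rpow_neg_one]; norm_num
    rw [h3inv] at h3le
    have hcmp : (x - 1) ^ (κ - 2) ≤ 3 * (1 + x) ^ (κ - 2) := by
      have h6 : 1 / 3 * (x - 1) ^ (κ - 2) ≤ (3:ℝ) ^ (κ - 2) * (x - 1) ^ (κ - 2) :=
        mul_le_mul_of_nonneg_right h3le hxk2.le
      linarith
    have hrpos : 0 < (1 + x) ^ (κ - 2) := Real.rpow_pos_of_pos h1x _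
    linarith
end

section
/- There exists a constant c' > 0 such that for all x > 0 and all v ∈ [a,b] ⊂ (1/α,1), one has |Θ(x,v)| ≤ c' (1+x)^{v - 1/α - 2}, where Θ(x,v) = θ(x,v) - θ(x-1,v) and θ(x,v) = (1+v-1/α)^{-1} Σ_{l=0}^{4} d_l (x - l/2)_+^{1+v-1/α} with d_0=1, d_1=-2, d_2=0, d_3=2, d_4=-1 (so that Θ has this explicit form). -/
noncomputable def Theta (α x v : ℝ) : ℝ := theta α x v - theta α (x - 1) v

/-!
With `κ = 1 + v - 1/α ∈ (1, 2)`, `Θ(x, v)` is `κ⁻¹` times the third forward difference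
`Δ_{1/2} Δ_{1/2} Δ_1` of `t ↦ (t)_+^κ` at `x - 2`. For `x ≤ 3` this is bounded, as `(t)_+^κ ≤ 9`
on `(-∞, 3]`. For `x > 2` every point involved is positive, and three applications of the mean
value theorem bound it by `sup_{[x-2, x]} |(t^κ)'''| / 4 ≤ (x - 2)^(κ-3)`, which is comparable to
`(1 + x)^(κ-3)` once `x ≥ 3`.
-/

open Real Set fwdDiff

section FwdDiff

variable {f f' : ℝ → ℝ} {a b h : ℝ}

theorem abs_fwdDiff_le_of_abs_deriv_le {M : ℝ} (hh : 0 ≤ h)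
    (hf : ∀ t ∈ Icc a (b + h), HasDerivAt f (f' t) t) (hM : ∀ t ∈ Icc a (b + h), |f' t| ≤ M) :
    ∀ t ∈ Icc a b, |Δ_[h] f t| ≤ M * h := by
  intro t ⟨hat, htb⟩
  have hsub : Icc t (t + h) ⊆ Icc a (b + h) := Icc_subset_Icc hat (by linarith)
  have := norm_image_sub_le_of_norm_deriv_le_segment'
    (fun s hs => (hf s (hsub hs)).hasDerivWithinAt)
    (fun s hs => hM s (hsub (Ico_subset_Icc_self hs))) (t + h) (right_mem_Icc.2 (by linarith))
  simpa [fwdDiff] using this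

theorem hasDerivAt_fwdDiff (hh : 0 ≤ h) (hf : ∀ t ∈ Icc a (b + h), HasDerivAt f (f' t) t) :
    ∀ t ∈ Icc a b, HasDerivAt (Δ_[h] f) (Δ_[h] f' t) t := fun t ⟨hat, htb⟩ =>
  ((hf (t + h) ⟨by linarith, by linarith⟩).comp_add_const t h).sub (hf t ⟨hat, by linarith⟩)

theorem abs_fwdDiff_le_of_abs_le {B : ℝ} (hh : 0 ≤ h) (hf : ∀ t ∈ Icc a (b + h), |f t| ≤ B) :
    ∀ t ∈ Icc a b, |Δ_[h] f t| ≤ 2 * B := fun t ⟨hat, htb⟩ => by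
  have h₁ := hf (t + h) ⟨by linarith, by linarith⟩
  have h₂ := hf t ⟨hat, by linarith⟩
  calc |Δ_[h] f t| ≤ |f (t + h)| + |f t| := abs_sub _ _
    _ ≤ 2 * B := by linarith

theorem abs_fwdDiff_fwdDiff_fwdDiff_le {f₁ f₂ f₃ : ℝ → ℝ} {y h₁ h₂ h₃ M : ℝ}
    (h₁0 : 0 ≤ h₁) (h₂0 : 0 ≤ h₂) (h₃0 : 0 ≤ h₃)
    (hf : ∀ t ∈ Icc y (y + h₁ + h₂ + h₃), HasDerivAt f (f₁ t) t)
    (hf₁ : ∀ t ∈ Icc y (y + h₁ + h₂ + h₃), HasDerivAt f₁ (f₂ t) t)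
    (hf₂ : ∀ t ∈ Icc y (y + h₁ + h₂ + h₃), HasDerivAt f₂ (f₃ t) t)
    (hM : ∀ t ∈ Icc y (y + h₁ + h₂ + h₃), |f₃ t| ≤ M) :
    |Δ_[h₁] (Δ_[h₂] (Δ_[h₃] f)) y| ≤ M * h₃ * h₂ * h₁ := by
  have bound₂ := abs_fwdDiff_le_of_abs_deriv_le h₃0 hf₂ hM
  have bound₁ :=
    abs_fwdDiff_le_of_abs_deriv_le h₂0 (hasDerivAt_fwdDiff h₃0 hf₁) bound₂
  exact abs_fwdDiff_le_of_abs_deriv_le h₁0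
    (hasDerivAt_fwdDiff h₂0 (hasDerivAt_fwdDiff h₃0 hf)) bound₁ y ⟨le_rfl, by linarith⟩

end FwdDiff

theorem fwdDiff_half_half_one_apply (f : ℝ → ℝ) (y : ℝ) :
    Δ_[1/2] (Δ_[1/2] (Δ_[1] f)) y = f (y + 2) - 2 * f (y + 3/2) + 2 * f (y + 1/2) - f y := by
  simp only [fwdDiff]
  norm_num [add_assoc]
  ring

theorem abs_posPow_le_nine {s κ : ℝ} (hs : s ≤ 3) (hκ0 : 0 ≤ κ) (hκ2 : κ ≤ 2) :
    |posPow s κ| ≤ 9 := by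
  unfold posPow
  split_ifs with hs0
  · rw [abs_of_nonneg (rpow_nonneg hs0.le _)]
    calc s ^ κ ≤ 3 ^ κ := rpow_le_rpow hs0.le hs hκ0
      _ ≤ 3 ^ (2 : ℝ) := rpow_le_rpow_of_exponent_le (by norm_num) hκ2
      _ = 9 := by norm_num
  · norm_num

theorem hasDerivAt_posPow {s κ : ℝ} (hs : 0 < s) :
    HasDerivAt (fun t => posPow t κ) (κ * s ^ (κ - 1)) s := by
  refine (hasDerivAt_rpow_const (Or.inl hs.ne')).congr_of_eventuallyEq ?_
  filter_upwards [Ioi_mem_nhds hs] with t ht using if_pos ht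

theorem hasDerivAt_const_mul_rpow (c p : ℝ) {s : ℝ} (hs : 0 < s) :
    HasDerivAt (fun t => c * t ^ p) (c * p * s ^ (p - 1)) s := by
  simpa only [mul_assoc] using (hasDerivAt_rpow_const (Or.inl hs.ne')).const_mul c

theorem Theta_eq_fwdDiff (α x v : ℝ) :
    Theta α x v = (1 + v - 1/α)⁻¹ *
      Δ_[1/2] (Δ_[1/2] (Δ_[1] fun t => posPow t (1 + v - 1/α))) (x - 2) := by
  rw [fwdDiff_half_half_one_apply]
  simp only [Theta, theta]
  ring_nf

theorem rpow_le_sixteen_mul_rpow {s t e : ℝ} (hs : 0 < s) (hst : s ≤ 4 * t) (he : -2 ≤ e)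
    (he' : e ≤ 0) : t ^ e ≤ 16 * s ^ e := by
  have h4 : (1 / 16 : ℝ) ≤ 4 ^ e := calc
    (1 / 16 : ℝ) = 4 ^ (-2 : ℝ) := by norm_num
    _ ≤ 4 ^ e := rpow_le_rpow_of_exponent_le (by norm_num) he
  calc t ^ e ≤ (s / 4) ^ e := rpow_le_rpow_of_nonpos (by positivity) (by linarith) he'
    _ = s ^ e / 4 ^ e := div_rpow hs.le (by norm_num) e
    _ ≤ s ^ e / (1 / 16) := by gcongr
    _ = 16 * s ^ e := by ring

section ThirdDifference

variable {κ x : ℝ}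

theorem abs_fwdDiff_posPow_le_of_le_three (hκ0 : 0 ≤ κ) (hκ2 : κ ≤ 2) (hx : x ≤ 3) :
    |Δ_[1/2] (Δ_[1/2] (Δ_[1] fun t => posPow t κ)) (x - 2)| ≤ 72 := by
  have bound₀ : ∀ t ∈ Icc (x - 2) (x - 2 + 1/2 + 1/2 + 1), |posPow t κ| ≤ 9 :=
    fun t ht => abs_posPow_le_nine (by linarith [ht.2]) hκ0 hκ2
  have bound₁ := abs_fwdDiff_le_of_abs_le (by norm_num) bound₀
  have bound₂ := abs_fwdDiff_le_of_abs_le (by norm_num) bound₁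
  have bound₃ := abs_fwdDiff_le_of_abs_le (by norm_num) bound₂ (x - 2) ⟨le_rfl, by linarith⟩
  linarith

theorem abs_fwdDiff_posPow_le_of_two_lt (hκ1 : 1 ≤ κ) (hκ2 : κ ≤ 2) (hx : 2 < x) :
    |Δ_[1/2] (Δ_[1/2] (Δ_[1] fun t => posPow t κ)) (x - 2)| ≤ (x - 2) ^ (κ - 3) / 4 := by
  have hpos : ∀ t ∈ Icc (x - 2) (x - 2 + 1/2 + 1/2 + 1), 0 < t := fun t ht => by
    linarith [ht.1]
  have hf₂ : ∀ t ∈ Icc (x - 2) (x - 2 + 1/2 + 1/2 + 1),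
      HasDerivAt (fun s => κ * (κ - 1) * s ^ (κ - 2)) (κ * (κ - 1) * (κ - 2) * t ^ (κ - 3)) t :=
    fun t ht => by
      convert hasDerivAt_const_mul_rpow (κ * (κ - 1)) (κ - 2) (hpos t ht) using 2; ring_nf
  have hf₁ : ∀ t ∈ Icc (x - 2) (x - 2 + 1/2 + 1/2 + 1),
      HasDerivAt (fun s => κ * s ^ (κ - 1)) (κ * (κ - 1) * t ^ (κ - 2)) t :=
    fun t ht => by
      convert hasDerivAt_const_mul_rpow κ (κ - 1) (hpos t ht) using 2; ring_nf
  have hM : ∀ t ∈ Icc (x - 2) (x - 2 + 1/2 + 1/2 + 1),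
      |κ * (κ - 1) * (κ - 2) * t ^ (κ - 3)| ≤ (x - 2) ^ (κ - 3) := fun t ht => by
    have hcoeff : |κ * (κ - 1) * (κ - 2)| ≤ 1 := by
      rw [abs_le]; constructor <;> nlinarith [mul_nonneg (sub_nonneg.2 hκ1) (sub_nonneg.2 hκ2)]
    rw [abs_mul, abs_of_pos (rpow_pos_of_pos (hpos t ht) _)]
    calc |κ * (κ - 1) * (κ - 2)| * t ^ (κ - 3) ≤ 1 * (x - 2) ^ (κ - 3) :=
          mul_le_mul hcoeff (rpow_le_rpow_of_nonpos (sub_pos.2 hx) ht.1 (by linarith))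
            (rpow_nonneg (hpos t ht).le _) zero_le_one
      _ = (x - 2) ^ (κ - 3) := one_mul _
  have := abs_fwdDiff_fwdDiff_fwdDiff_le (by norm_num) (by norm_num) (by norm_num)
    (fun t ht => hasDerivAt_posPow (hpos t ht)) hf₁ hf₂ hM
  linarith

end ThirdDifference

theorem stmt4 (α a b : ℝ) (hα : 1 < α ∧ α < 2) (hab : 1/α < a ∧ a < b ∧ b < 1) :
    ∃ c : ℝ, 0 < c ∧ ∀ x v : ℝ, 0 < x → v ∈ Set.Icc a b →
      |Theta α x v| ≤ c * (1 + x) ^ (v - 1/α - 2) := by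
  refine ⟨1152, by norm_num, fun x v hx ⟨hav, hvb⟩ => ?_⟩
  have hα₀ : 0 < 1/α := one_div_pos.2 (by linarith)
  set κ := 1 + v - 1/α with hκ
  have hκ1 : 1 < κ := by linarith
  have hκ2 : κ < 2 := by linarith
  have hκinv : |κ⁻¹| ≤ 1 := by
    rw [abs_inv, abs_of_pos (by linarith)]; exact inv_le_one_of_one_le₀ hκ1.le
  rw [show v - 1/α - 2 = κ - 3 by ring, Theta_eq_fwdDiff, abs_mul]
  rcases le_or_gt x 3 with hx3 | hx3
  · have hrhs : 1 ≤ 16 * (1 + x) ^ (κ - 3) := by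
      simpa using rpow_le_sixteen_mul_rpow (t := 1) (by linarith) (by linarith)
        (by linarith) (by linarith)
    calc |κ⁻¹| * |Δ_[1/2] (Δ_[1/2] (Δ_[1] fun t => posPow t κ)) (x - 2)| ≤ 1 * 72 :=
          mul_le_mul hκinv (abs_fwdDiff_posPow_le_of_le_three (by linarith) hκ2.le hx3)
            (abs_nonneg _) zero_le_one
      _ ≤ 1152 * (1 + x) ^ (κ - 3) := by linarith
  · have hrhs : (x - 2) ^ (κ - 3) ≤ 16 * (1 + x) ^ (κ - 3) :=
      rpow_le_sixteen_mul_rpow (by linarith) (by linarith) (by linarith) (by linarith)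
    calc |κ⁻¹| * |Δ_[1/2] (Δ_[1/2] (Δ_[1] fun t => posPow t κ)) (x - 2)|
        ≤ 1 * ((x - 2) ^ (κ - 3) / 4) :=
          mul_le_mul hκinv (abs_fwdDiff_posPow_le_of_two_lt hκ1.le hκ2.le (by linarith))
            (abs_nonneg _) zero_le_one
      _ ≤ 1152 * (1 + x) ^ (κ - 3) := by linarith [rpow_nonneg (by linarith : 0 ≤ 1 + x) (κ - 3)]
end

section
/- Decay of the x-derivative of θ: there exists c > 0 such that for all x > 0 and v ∈ [a,b] ⊂ (1/α,1), |(x-1)_+^{v-1/α} - 2(x-1/2)_+^{v-1/α} + x_+^{v-1/α}| ≤ c (1+x)^{v-1/α-2}; moreover this quantity is 0 for x ≤ 0. -/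
/-!
Write `κ = v - 1/α ∈ (0, 1)`. For `x > 1` all three terms are genuine powers, and two applications
of the mean value theorem turn the second difference into `κ (κ - 1) η ^ (κ - 2) / 4` for some
`η > x - 1`; since `κ - 2 < 0` this is `O((1 + x) ^ (κ - 2))`. For `0 < x ≤ 2` each term lies in
`[0, 2]`, while `(1 + x) ^ (κ - 2) ≥ 3 ^ (-2)`.
-/

open Set

lemma posPow_of_pos {s : ℝ} (κ : ℝ) (hs : 0 < s) : posPow s κ = s ^ κ := if_pos hs

lemma posPow_of_nonpos {s : ℝ} (κ : ℝ) (hs : s ≤ 0) : posPow s κ = 0 := if_neg hs.not_gt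

lemma posPow_nonneg (s κ : ℝ) : 0 ≤ posPow s κ := by
  unfold posPow
  split_ifs with hs
  · exact Real.rpow_nonneg hs.le κ
  · exact le_rfl

lemma posPow_le {s κ M : ℝ} (hκ0 : 0 ≤ κ) (hκ1 : κ ≤ 1) (hM : 1 ≤ M) (hs : s ≤ M) :
    posPow s κ ≤ M := by
  rcases le_or_gt s 0 with hs0 | hs0
  · rw [posPow_of_nonpos κ hs0]; linarith
  rw [posPow_of_pos κ hs0]
  rcases le_or_gt s 1 with hs1 | hs1
  · exact (Real.rpow_le_one hs0.le hs1 hκ0).trans hM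
  · calc s ^ κ ≤ s ^ (1 : ℝ) := Real.rpow_le_rpow_of_exponent_le hs1.le hκ1
      _ = s := Real.rpow_one s
      _ ≤ M := hs

theorem exists_second_difference_eq_sq_mul {f f' f'' : ℝ → ℝ} {x h : ℝ} (hh : 0 < h)
    (hf : ∀ y ∈ Icc x (x + 2 * h), HasDerivAt f (f' y) y)
    (hf' : ∀ y ∈ Icc x (x + 2 * h), HasDerivAt f' (f'' y) y) :
    ∃ η ∈ Ioo x (x + 2 * h), f x - 2 * f (x + h) + f (x + 2 * h) = h ^ 2 * f'' η := by
  have hg : ∀ y ∈ Icc x (x + h),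
      HasDerivAt (fun y => f (y + h) - f y) (f' (y + h) - f' y) y := fun y hy =>
    ((hf (y + h) ⟨by linarith [hy.1], by linarith [hy.2]⟩).comp_add_const y h).sub
      (hf y ⟨hy.1, by linarith [hy.2]⟩)
  obtain ⟨ξ, hξ, hξeq⟩ := exists_hasDerivAt_eq_slope _ _ (by linarith : x < x + h)
    (fun y hy => (hg y hy).continuousAt.continuousWithinAt)
    (fun y hy => hg y (Ioo_subset_Icc_self hy))
  have hf'_on : ∀ y ∈ Icc ξ (ξ + h), HasDerivAt f' (f'' y) y := fun y hy =>
    hf' y ⟨by linarith [hξ.1, hy.1], by linarith [hξ.2, hy.2]⟩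
  obtain ⟨η, hη, hηeq⟩ := exists_hasDerivAt_eq_slope f' f'' (by linarith : ξ < ξ + h)
    (fun y hy => (hf'_on y hy).continuousAt.continuousWithinAt)
    (fun y hy => hf'_on y (Ioo_subset_Icc_self hy))
  refine ⟨η, ⟨by linarith [hξ.1, hη.1], by linarith [hξ.2, hη.2]⟩, ?_⟩
  rw [show x + h - x = h by ring] at hξeq
  rw [show ξ + h - ξ = h by ring] at hηeq
  rw [eq_div_iff hh.ne'] at hξeq hηeq
  rw [show x + 2 * h = x + h + h by ring]
  linear_combination (-h) * hηeq - hξeq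

theorem exists_rpow_second_difference_eq (κ : ℝ) {y h : ℝ} (hy : 0 < y) (hh : 0 < h) :
    ∃ η ∈ Ioo y (y + 2 * h),
      y ^ κ - 2 * (y + h) ^ κ + (y + 2 * h) ^ κ = h ^ 2 * (κ * (κ - 1) * η ^ (κ - 2)) := by
  have hderiv (p t : ℝ) (ht : t ∈ Icc y (y + 2 * h)) :
      HasDerivAt (fun t => t ^ p) (p * t ^ (p - 1)) t :=
    Real.hasDerivAt_rpow_const (Or.inl (hy.trans_le ht.1).ne')
  obtain ⟨η, hη, heq⟩ := exists_second_difference_eq_sq_mul hh (hderiv κ)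
    (fun t ht => (hderiv (κ - 1) t ht).const_mul κ)
  refine ⟨η, hη, ?_⟩
  rw [heq, show κ - 1 - 1 = κ - 2 by ring, mul_assoc κ]

theorem abs_rpow_second_difference_le {κ y h : ℝ} (hκ0 : 0 ≤ κ) (hκ1 : κ ≤ 1) (hy : 0 < y)
    (hh : 0 < h) :
    |y ^ κ - 2 * (y + h) ^ κ + (y + 2 * h) ^ κ| ≤ h ^ 2 / 4 * y ^ (κ - 2) := by
  obtain ⟨η, hη, heq⟩ := exists_rpow_second_difference_eq κ hy hh
  have hcoef : |κ * (κ - 1)| ≤ 1 / 4 := by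
    rw [abs_le]; constructor <;> nlinarith [sq_nonneg (κ - 1 / 2)]
  have hpow : η ^ (κ - 2) ≤ y ^ (κ - 2) :=
    Real.rpow_le_rpow_of_nonpos hy hη.1.le (by linarith)
  have hη0 : 0 ≤ η ^ (κ - 2) := Real.rpow_nonneg (hy.trans hη.1).le _
  rw [heq, abs_mul, abs_mul, abs_of_nonneg hη0, abs_of_pos (by positivity)]
  calc h ^ 2 * (|κ * (κ - 1)| * η ^ (κ - 2)) ≤ h ^ 2 * (1 / 4 * y ^ (κ - 2)) := by gcongr
    _ = h ^ 2 / 4 * y ^ (κ - 2) := by ring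

lemma rpow_le_nine_mul_rpow {s t e : ℝ} (ht : 0 < t) (hts : t ≤ 3 * s)
    (he2 : -2 ≤ e) (he0 : e ≤ 0) : s ^ e ≤ 9 * t ^ e := by
  have hnine : (1 / 9 : ℝ) ≤ 3 ^ e := by
    calc (1 / 9 : ℝ) = 3 ^ (-2 : ℝ) := by norm_num
      _ ≤ 3 ^ e := Real.rpow_le_rpow_of_exponent_le (by norm_num) he2
  calc s ^ e ≤ (t / 3) ^ e := Real.rpow_le_rpow_of_nonpos (by positivity) (by linarith) he0
    _ = t ^ e / 3 ^ e := Real.div_rpow ht.le (by norm_num) e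
    _ ≤ t ^ e / (1 / 9) := by gcongr
    _ = 9 * t ^ e := by ring

/-- The quantity `∂ₓθ(x, v)` of the paper, with `κ = v - 1/α`. -/
noncomputable def posPowSecondDiff (κ x : ℝ) : ℝ :=
  posPow (x - 1) κ - 2 * posPow (x - 1 / 2) κ + posPow x κ

lemma posPowSecondDiff_of_nonpos (κ : ℝ) {x : ℝ} (hx : x ≤ 0) : posPowSecondDiff κ x = 0 := by
  simp only [posPowSecondDiff, posPow_of_nonpos κ hx,
    posPow_of_nonpos κ (by linarith : x - 1 ≤ 0), posPow_of_nonpos κ (by linarith : x - 1 / 2 ≤ 0)]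
  ring

lemma abs_posPowSecondDiff_le_four {κ x : ℝ} (hκ0 : 0 ≤ κ) (hκ1 : κ ≤ 1) (hx : x ≤ 2) :
    |posPowSecondDiff κ x| ≤ 4 := by
  have hbound (s : ℝ) (hs : s ≤ 2) : posPow s κ ≤ 2 := posPow_le hκ0 hκ1 (by norm_num) hs
  rw [posPowSecondDiff, abs_le]
  constructor <;> linarith [hbound (x - 1) (by linarith), hbound (x - 1 / 2) (by linarith),
    hbound x hx, posPow_nonneg (x - 1) κ, posPow_nonneg (x - 1 / 2) κ, posPow_nonneg x κ]

lemma abs_posPowSecondDiff_le_of_one_lt {κ x : ℝ} (hκ0 : 0 ≤ κ) (hκ1 : κ ≤ 1) (hx : 1 < x) :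
    |posPowSecondDiff κ x| ≤ (x - 1) ^ (κ - 2) / 16 := by
  have h := abs_rpow_second_difference_le hκ0 hκ1 (sub_pos.2 hx) (by norm_num : (0 : ℝ) < 1 / 2)
  rw [show x - 1 + 1 / 2 = x - 1 / 2 by ring, show x - 1 + 2 * (1 / 2) = x by ring] at h
  rw [posPowSecondDiff, posPow_of_pos κ (sub_pos.2 hx), posPow_of_pos κ (by linarith),
    posPow_of_pos κ (by linarith)]
  linarith

theorem abs_posPowSecondDiff_le {κ x : ℝ} (hκ0 : 0 ≤ κ) (hκ1 : κ ≤ 1) (hx : 0 < x) :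
    |posPowSecondDiff κ x| ≤ 36 * (1 + x) ^ (κ - 2) := by
  rcases le_or_gt x 2 with hx2 | hx2
  · have h := rpow_le_nine_mul_rpow (s := 1) (by linarith : 0 < 1 + x) (by linarith)
      (by linarith : -2 ≤ κ - 2) (by linarith)
    rw [Real.one_rpow] at h
    linarith [abs_posPowSecondDiff_le_four hκ0 hκ1 hx2]
  · have h := rpow_le_nine_mul_rpow (s := x - 1) (by linarith : 0 < 1 + x)
      (by linarith) (by linarith : -2 ≤ κ - 2) (by linarith)
    have h0 : 0 ≤ (1 + x) ^ (κ - 2) := Real.rpow_nonneg (by linarith) _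
    linarith [abs_posPowSecondDiff_le_of_one_lt hκ0 hκ1 (by linarith : 1 < x)]

theorem stmt16 (α a b : ℝ) (hα : 1 < α ∧ α < 2) (hab : 1/α < a ∧ a < b ∧ b < 1) :
    (∃ c : ℝ, 0 < c ∧ ∀ x v : ℝ, 0 < x → v ∈ Set.Icc a b →
      |posPow (x - 1) (v - 1/α) - 2 * posPow (x - 1/2) (v - 1/α) + posPow x (v - 1/α)|
        ≤ c * (1 + x) ^ (v - 1/α - 2)) ∧
    (∀ x v : ℝ, x ≤ 0 → v ∈ Set.Icc a b →
      posPow (x - 1) (v - 1/α) - 2 * posPow (x - 1/2) (v - 1/α) + posPow x (v - 1/α) = 0) := by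
  have hα_inv : 0 < 1 / α := by have := hα.1; positivity
  exact ⟨⟨36, by norm_num, fun x v hx hv =>
      abs_posPowSecondDiff_le (by linarith [hab.1, hv.1]) (by linarith [hab.2.2, hv.2]) hx⟩,
    fun x v hx _ => posPowSecondDiff_of_nonpos (v - 1 / α) hx⟩
end
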